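/- arXiv:1207.6926 — 8 statements merged into one kernel-verified Lean document; each statement's English description precedes it below -/
import Mathlib

section
/- Let n be a positive integer and let A, B, C be complex n×n positive semidefinite matrices. Then the matrix A·tr(BC) + C·tr(BA) − A B C − C B A is positive semidefinite (in particular it is Hermitian). -/
/-!
The matrix `tr(BC) A + tr(BA) C - ABC - CBA` is additive in each of `A`, `B`, `C`, and every
positive semidefinite matrix is a sum of rank-one matrices `v vᴴ`. So it suffices to treat
`A = a aᴴ`, `B = b bᴴ`, `C = c cᴴ`, where the matrix is the Gram matrix `w wᴴ` of the single
vector `w = (bᴴ c) a - (bᴴ a) c`.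
-/

open scoped ComplexOrder

namespace Matrix

variable {n R : Type*} [Fintype n]

def traceCross [Ring R] (A B C : Matrix n n R) : Matrix n n R :=
  (B * C).trace • A + (B * A).trace • C - A * B * C - C * B * A

section Ring

variable [Ring R]

lemma traceCross_comm (A B C : Matrix n n R) : traceCross A B C = traceCross C B A := by
  simp only [traceCross]
  abel

lemma traceCross_sum_left {ι : Type*} (s : Finset ι) (A : ι → Matrix n n R)
    (B C : Matrix n n R) :
    traceCross (∑ i ∈ s, A i) B C = ∑ i ∈ s, traceCross (A i) B C := by
  simp only [traceCross, Finset.mul_sum, Finset.sum_mul, trace_sum, Finset.smul_sum,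
    Finset.sum_smul, Finset.sum_add_distrib, Finset.sum_sub_distrib]

lemma traceCross_sum_middle {ι : Type*} (s : Finset ι) (A C : Matrix n n R)
    (B : ι → Matrix n n R) :
    traceCross A (∑ i ∈ s, B i) C = ∑ i ∈ s, traceCross A (B i) C := by
  simp only [traceCross, Finset.mul_sum, Finset.sum_mul, trace_sum, Finset.sum_smul,
    Finset.sum_add_distrib, Finset.sum_sub_distrib]

lemma traceCross_sum_right {ι : Type*} (s : Finset ι) (A B : Matrix n n R)
    (C : ι → Matrix n n R) :
    traceCross A B (∑ i ∈ s, C i) = ∑ i ∈ s, traceCross A B (C i) := by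
  simp only [traceCross_comm A, traceCross_sum_left]

end Ring

lemma traceCross_vecMulVec [CommRing R] [StarRing R] (a b c : n → R) :
    traceCross (vecMulVec a (star a)) (vecMulVec b (star b)) (vecMulVec c (star c)) =
      vecMulVec ((star b ⬝ᵥ c) • a - (star b ⬝ᵥ a) • c)
        (star ((star b ⬝ᵥ c) • a - (star b ⬝ᵥ a) • c)) := by
  simp only [traceCross, vecMulVec_mul_vecMulVec, trace_vecMulVec, smul_dotProduct,
    dotProduct_comm b, star_dotProduct b]
  ext i j
  simp only [vecMulVec_apply, sub_apply, add_apply, smul_apply, smul_eq_mul, Pi.sub_apply,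
    Pi.smul_apply, Pi.star_apply, star_sub, star_smul, star_star]
  ring

theorem PosSemidef.traceCross {𝕜 : Type*} [RCLike 𝕜] {A B C : Matrix n n 𝕜}
    (hA : A.PosSemidef) (hB : B.PosSemidef) (hC : C.PosSemidef) :
    (traceCross A B C).PosSemidef := by
  obtain ⟨_, a, rfl⟩ := posSemidef_iff_eq_sum_vecMulVec.mp hA
  obtain ⟨_, b, rfl⟩ := posSemidef_iff_eq_sum_vecMulVec.mp hB
  obtain ⟨_, c, rfl⟩ := posSemidef_iff_eq_sum_vecMulVec.mp hC
  rw [traceCross_sum_left]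
  refine posSemidef_sum _ fun i _ => ?_
  rw [traceCross_sum_middle]
  refine posSemidef_sum _ fun j _ => ?_
  rw [traceCross_sum_right]
  refine posSemidef_sum _ fun k _ => ?_
  rw [traceCross_vecMulVec]
  exact posSemidef_vecMulVec_self_star _

end Matrix

theorem stmt_0_general (n : ℕ) (A B C : Matrix (Fin n) (Fin n) ℂ)
    (hA : A.PosSemidef) (hB : B.PosSemidef) (hC : C.PosSemidef) :
    ((B * C).trace • A + (B * A).trace • C - A * B * C - C * B * A).PosSemidef :=
  hA.traceCross hB hC

theorem stmt_0 (n : ℕ) (hn : 0 < n) (A B C : Matrix (Fin n) (Fin n) ℂ)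
    (hA : A.PosSemidef) (hB : B.PosSemidef) (hC : C.PosSemidef) :
    ((B * C).trace • A + (B * A).trace • C - A * B * C - C * B * A).PosSemidef :=
  stmt_0_general n A B C hA hB hC
end

section
/- Let ω(k) = 1 − cos(2πk). For all real k₁, k₂, k₃, k₄ with k₁ + k₂ − k₃ − k₄ ∈ ℤ, the energy conservation ω(k₁) + ω(k₂) − ω(k₃) − ω(k₄) = 0 holds if and only if k₁ − k₃ ∈ ℤ, or k₁ − k₄ ∈ ℤ, or k₃ + k₄ − 1/2 ∈ ℤ. -/
/-!
Momentum conservation gives `k₂ ≡ k₃ + k₄ - k₁ (mod 1)`, and `ω` has period `1`, so the energy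
defect is a function of `k₁, k₃, k₄` alone. By product-to-sum formulas it factors as
`4 sin π(k₁ - k₃) · sin π(k₁ - k₄) · cos π(k₃ + k₄)`, and the zeros of the three factors are the
three families of solutions.
-/

/-- The nearest-neighbor dispersion relation of the Hubbard chain. -/
noncomputable def ω (k : ℝ) : ℝ := 1 - Real.cos (2 * Real.pi * k)

open Real

theorem ω_add_intCast (k : ℝ) (m : ℤ) : ω (k + m) = ω k := by
  rw [ω, ω, mul_add, mul_comm (2 * π) (m : ℝ), cos_add_int_mul_two_pi]

theorem four_mul_sin_mul_sin_mul_cos (u v w : ℝ) :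
    4 * sin u * sin v * cos w =
      cos (w + (u - v)) + cos (w - (u - v)) - cos (w + (u + v)) - cos (w - (u + v)) := by
  simp only [cos_add, cos_sub, sin_add, sin_sub]
  ring

theorem ω_add_ω_sub_sub_eq_mul (k₁ k₃ k₄ : ℝ) :
    ω k₁ + ω (k₃ + k₄ - k₁) - ω k₃ - ω k₄ =
      4 * sin (π * (k₁ - k₃)) * sin (π * (k₁ - k₄)) * cos (π * (k₃ + k₄)) := by
  rw [four_mul_sin_mul_sin_mul_cos]
  simp only [ω]
  ring_nf

theorem sin_pi_mul_eq_zero_iff (x : ℝ) : sin (π * x) = 0 ↔ ∃ m : ℤ, x = m := by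
  rw [sin_eq_zero_iff]
  refine exists_congr fun m => ?_
  rw [mul_comm π, eq_comm]
  exact mul_left_inj' pi_ne_zero

theorem cos_pi_mul_eq_zero_iff (x : ℝ) : cos (π * x) = 0 ↔ ∃ m : ℤ, x - 1 / 2 = m := by
  rw [cos_eq_zero_iff]
  refine exists_congr fun m => ⟨fun h => ?_, fun h => ?_⟩
  · exact mul_left_cancel₀ pi_ne_zero (by linear_combination h)
  · linear_combination π * h

theorem stmt_2 (k₁ k₂ k₃ k₄ : ℝ) (hmom : ∃ m : ℤ, k₁ + k₂ - k₃ - k₄ = m) :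
    ω k₁ + ω k₂ - ω k₃ - ω k₄ = 0 ↔
      (∃ m : ℤ, k₁ - k₃ = m) ∨ (∃ m : ℤ, k₁ - k₄ = m) ∨
        (∃ m : ℤ, k₃ + k₄ - 1/2 = m) := by
  obtain ⟨m, hm⟩ := hmom
  have hk₂ : k₂ = k₃ + k₄ - k₁ + m := by linarith
  rw [hk₂, ω_add_intCast, ω_add_ω_sub_sub_eq_mul]
  simp only [mul_eq_zero, four_ne_zero, false_or, or_assoc, sin_pi_mul_eq_zero_iff,
    cos_pi_mul_eq_zero_iff]
end

section
/- Let ω(k) = 1 − cos(2πk) and let g : ℝ → ℝ be 1-periodic and satisfy g(k) = −g(1/2 − k) for all real k. Then for all real k₁, k₂, k₃, k₄ with k₁ + k₂ − k₃ − k₄ ∈ ℤ and ω(k₁) + ω(k₂) = ω(k₃) + ω(k₄), one has g(k₁) + g(k₂) − g(k₃) − g(k₄) = 0. (This is the pointwise collision invariance underlying the infinitely many conservation laws of the nearest-neighbor Hubbard kinetic equation.) -/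
open Real AddCommGroup

theorem Function.Periodic.eq_of_modEq {α β : Type*} [AddCommGroup α] {f : α → β} {c a b : α}
    (hf : f.Periodic c) (hab : a ≡ b [PMOD c]) : f a = f b := by
  obtain ⟨n, hn⟩ := modEq_iff_zsmul'.mp hab
  rw [eq_add_of_sub_eq' hn, hf.zsmul n]

theorem Function.Periodic.add_eq_zero_of_add_modEq_half {G : Type*} [AddGroup G] {g : ℝ → G}
    (hper : g.Periodic 1) (hsym : ∀ k, g k = -g (1 / 2 - k)) {k k' : ℝ}
    (h : k + k' ≡ 1 / 2 [PMOD 1]) :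
    g k + g k' = 0 := by
  have hk' : k' ≡ 1 / 2 - k [PMOD 1] := by simpa using h.sub_right k
  rw [hper.eq_of_modEq hk', hsym k, neg_add_cancel]

theorem mul_eq_neg_one_or_eq_and_eq_of_add_inv_eq {K : Type*} [Field K] {z₁ z₂ z₃ z₄ : K}
    (h₁ : z₁ ≠ 0) (h₂ : z₂ ≠ 0) (h₃ : z₃ ≠ 0) (h₄ : z₄ ≠ 0) (hprod : z₁ * z₂ = z₃ * z₄)
    (hsum : z₁ + z₁⁻¹ + (z₂ + z₂⁻¹) = z₃ + z₃⁻¹ + (z₄ + z₄⁻¹)) :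
    z₃ * z₄ = -1 ∨ (z₃ = z₁ ∧ z₄ = z₂) ∨ (z₃ = z₂ ∧ z₄ = z₁) := by
  field_simp at hsum
  have hfactor : z₃ * z₄ * ((z₁ + z₂ - z₃ - z₄) * (z₃ * z₄ + 1)) = 0 := by
    linear_combination hsum + ((z₃ + z₄) * (z₃ * z₄ + 1) - z₃ * z₄ * (z₁ + z₂)) * hprod
  rcases mul_eq_zero.mp ((mul_eq_zero.mp hfactor).resolve_left (mul_ne_zero h₃ h₄)) with
    hadd | hmul
  · right
    have hroot : (z₃ - z₁) * (z₃ - z₂) = 0 := by linear_combination (-z₃) * hadd + hprod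
    rcases mul_eq_zero.mp hroot with h | h
    · exact .inl ⟨by linear_combination h, by linear_combination -hadd - h⟩
    · exact .inr ⟨by linear_combination h, by linear_combination -hadd - h⟩
  · exact .inl (by linear_combination hmul)

noncomputable def planeWave (k : ℝ) : Circle := Circle.exp (2 * π * k)

theorem planeWave_add (k k' : ℝ) : planeWave (k + k') = planeWave k * planeWave k' := by
  rw [planeWave, mul_add, Circle.exp_add, planeWave, planeWave]

theorem planeWave_eq_planeWave_iff {k k' : ℝ} : planeWave k = planeWave k' ↔ k ≡ k' [PMOD 1] := by
  rw [planeWave, planeWave, Circle.exp_inj, mul_modEq_mul_left two_pi_pos.ne',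
    div_self two_pi_pos.ne']

theorem planeWave_half : planeWave (1 / 2) = -1 := by
  ext
  rw [planeWave, Circle.coe_exp, Circle.coe_neg, Circle.coe_one]
  push_cast
  rw [show 2 * (π : ℂ) * (1 / 2) = π by ring, Complex.exp_pi_mul_I]

theorem coe_planeWave_add_inv (k : ℝ) :
    (planeWave k : ℂ) + (planeWave k : ℂ)⁻¹ = 2 * Real.cos (2 * π * k) := by
  rw [← Circle.coe_inv, planeWave, ← Circle.exp_neg, Circle.coe_exp, Circle.coe_exp,
    Complex.ofReal_cos, Complex.two_cos]
  push_cast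
  ring_nf

theorem collision_cases {k₁ k₂ k₃ k₄ : ℝ} (hmom : k₁ + k₂ ≡ k₃ + k₄ [PMOD 1])
    (hen : ω k₁ + ω k₂ = ω k₃ + ω k₄) :
    k₃ + k₄ ≡ 1 / 2 [PMOD 1] ∨ (k₃ ≡ k₁ [PMOD 1] ∧ k₄ ≡ k₂ [PMOD 1]) ∨
      (k₃ ≡ k₂ [PMOD 1] ∧ k₄ ≡ k₁ [PMOD 1]) := by
  have hprod : (planeWave k₁ : ℂ) * planeWave k₂ = planeWave k₃ * planeWave k₄ := by
    rw [← Circle.coe_mul, ← Circle.coe_mul, ← planeWave_add, ← planeWave_add,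
      planeWave_eq_planeWave_iff.mpr hmom]
  have hsum : (planeWave k₁ : ℂ) + (planeWave k₁ : ℂ)⁻¹ + (planeWave k₂ + (planeWave k₂ : ℂ)⁻¹)
      = planeWave k₃ + (planeWave k₃ : ℂ)⁻¹ + (planeWave k₄ + (planeWave k₄ : ℂ)⁻¹) := by
    simp only [coe_planeWave_add_inv]
    unfold ω at hen
    exact_mod_cast by linarith
  simp only [← planeWave_eq_planeWave_iff]
  rcases mul_eq_neg_one_or_eq_and_eq_of_add_inv_eq (Circle.coe_ne_zero _) (Circle.coe_ne_zero _)
    (Circle.coe_ne_zero _) (Circle.coe_ne_zero _) hprod hsum with h | ⟨h₃, h₄⟩ | ⟨h₃, h₄⟩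
  · left
    rw [planeWave_add, planeWave_half]
    ext
    simpa using h
  · exact .inr (.inl ⟨Circle.ext h₃, Circle.ext h₄⟩)
  · exact .inr (.inr ⟨Circle.ext h₃, Circle.ext h₄⟩)

theorem stmt_3 (g : ℝ → ℝ) (hper : Function.Periodic g 1)
    (hsym : ∀ k : ℝ, g k = -g (1/2 - k))
    (k₁ k₂ k₃ k₄ : ℝ) (hmom : ∃ m : ℤ, k₁ + k₂ - k₃ - k₄ = m)
    (hen : ω k₁ + ω k₂ = ω k₃ + ω k₄) :
    g k₁ + g k₂ - g k₃ - g k₄ = 0 := by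
  obtain ⟨m, hm⟩ := hmom
  have hmod : k₁ + k₂ ≡ k₃ + k₄ [PMOD 1] :=
    modEq_iff_zsmul'.mpr ⟨-m, by simp only [neg_smul, zsmul_eq_mul, mul_one]; linarith⟩
  rcases collision_cases hmod hen with h | ⟨h₃, h₄⟩ | ⟨h₃, h₄⟩
  · have h₁₂ := hper.add_eq_zero_of_add_modEq_half hsym (hmod.trans h)
    have h₃₄ := hper.add_eq_zero_of_add_modEq_half hsym h
    linarith
  · rw [hper.eq_of_modEq h₃, hper.eq_of_modEq h₄]
    ring
  · rw [hper.eq_of_modEq h₃, hper.eq_of_modEq h₄]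
    ring
end

section
/- The function g : ℝ² → ℝ defined by g(a,u) = log(cosh(a) + cosh(u)) is strictly convex on ℝ². -/
/-!
By the sum-to-product formula, `cosh a + cosh u = 2 cosh ((a + u) / 2) cosh ((a - u) / 2)`, so
`log (cosh a + cosh u)` is `log 2` plus the separable function `log cosh s + log cosh t` of the
invertible linear change of variables `(s, t) = ((a + u) / 2, (a - u) / 2)`. Since `log cosh` is
strictly convex (its derivative `tanh` is strictly increasing), so is the separable sum, and
strict convexity survives composition with an injective linear map.
-/

open Real Set

section StrictConvexOn

variable {𝕜 E F β : Type*} [Semiring 𝕜] [PartialOrder 𝕜]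
  [AddCommMonoid E] [AddCommMonoid F] [AddCommMonoid β] [PartialOrder β]

theorem StrictConvexOn.comp_linearMap [Module 𝕜 E] [Module 𝕜 F] [SMul 𝕜 β] {f : F → β}
    {s : Set F} (hf : StrictConvexOn 𝕜 s f) (g : E →ₗ[𝕜] F) (hg : Function.Injective g) :
    StrictConvexOn 𝕜 (g ⁻¹' s) (f ∘ g) :=
  ⟨hf.1.linear_preimage g, fun x hx y hy hxy a b ha hb hab =>
    calc f (g (a • x + b • y)) = f (a • g x + b • g y) := by
          rw [g.map_add, g.map_smul, g.map_smul]
      _ < a • f (g x) + b • f (g y) := hf.2 hx hy (hg.ne hxy) ha hb hab⟩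

theorem StrictConvexOn.comp_fst_add_comp_snd [Module 𝕜 E] [Module 𝕜 F]
    [IsOrderedCancelAddMonoid β] [Module 𝕜 β]
    {f : E → β} {g : F → β} {s : Set E} {t : Set F}
    (hf : StrictConvexOn 𝕜 s f) (hg : StrictConvexOn 𝕜 t g) :
    StrictConvexOn 𝕜 (s ×ˢ t) (fun p : E × F => f p.1 + g p.2) := by
  refine ⟨hf.1.prod hg.1, fun x hx y hy hxy a b ha hb hab => ?_⟩
  have hsum : f (a • x.1 + b • y.1) + g (a • x.2 + b • y.2)
      < (a • f x.1 + b • f y.1) + (a • g x.2 + b • g y.2) := by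
    by_cases h₁ : x.1 = y.1
    · have h₂ : x.2 ≠ y.2 := fun h₂ => hxy (Prod.ext h₁ h₂)
      exact add_lt_add_of_le_of_lt (hf.convexOn.2 hx.1 hy.1 ha.le hb.le hab)
        (hg.2 hx.2 hy.2 h₂ ha hb hab)
    · exact add_lt_add_of_lt_of_le (hf.2 hx.1 hy.1 h₁ ha hb hab)
        (hg.convexOn.2 hx.2 hy.2 ha.le hb.le hab)
  simpa only [Prod.fst_add, Prod.snd_add, Prod.smul_fst, Prod.smul_snd, smul_add,
    add_add_add_comm] using hsum

end StrictConvexOn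

namespace Real

theorem hasDerivAt_tanh (x : ℝ) : HasDerivAt tanh (1 / cosh x ^ 2) x := by
  have h := (hasDerivAt_sinh x).div (hasDerivAt_cosh x) (cosh_pos x).ne'
  rw [← sq, ← sq, cosh_sq_sub_sinh_sq] at h
  rwa [show tanh = sinh / cosh from funext tanh_eq_sinh_div_cosh]

theorem strictMono_tanh : StrictMono tanh :=
  strictMono_of_hasDerivAt_pos hasDerivAt_tanh fun x => by positivity

theorem deriv_log_cosh : deriv (fun x => log (cosh x)) = tanh := by
  funext x
  rw [((hasDerivAt_cosh x).log (cosh_pos x).ne').deriv, tanh_eq_sinh_div_cosh]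

theorem strictConvexOn_log_cosh : StrictConvexOn ℝ univ (fun x => log (cosh x)) := by
  refine StrictMonoOn.strictConvexOn_of_deriv convex_univ ?_ ?_
  · exact (continuous_cosh.log fun x => (cosh_pos x).ne').continuousOn
  · rw [deriv_log_cosh]
    exact strictMono_tanh.strictMonoOn _

theorem cosh_add_cosh (a u : ℝ) :
    cosh a + cosh u = 2 * cosh ((a + u) / 2) * cosh ((a - u) / 2) := by
  obtain ⟨s, t, rfl, rfl⟩ : ∃ s t, a = s + t ∧ u = s - t :=
    ⟨(a + u) / 2, (a - u) / 2, by ring, by ring⟩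
  rw [show (s + t + (s - t)) / 2 = s by ring, show (s + t - (s - t)) / 2 = t by ring,
    cosh_add, cosh_sub]
  ring

end Real

noncomputable def halfSumDiff : ℝ × ℝ →ₗ[ℝ] ℝ × ℝ where
  toFun p := ((p.1 + p.2) / 2, (p.1 - p.2) / 2)
  map_add' p q := by ext <;> simp only [Prod.fst_add, Prod.snd_add] <;> ring
  map_smul' c p := by ext <;> simp only [Prod.smul_fst, Prod.smul_snd, smul_eq_mul,
    RingHom.id_apply] <;> ring

theorem halfSumDiff_injective : Function.Injective halfSumDiff := by
  intro p q h
  simp only [halfSumDiff, LinearMap.coe_mk, AddHom.coe_mk, Prod.mk.injEq] at h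
  ext <;> linarith [h.1, h.2]

theorem log_cosh_add_cosh (p : ℝ × ℝ) :
    log (cosh p.1 + cosh p.2)
      = log (cosh (halfSumDiff p).1) + log (cosh (halfSumDiff p).2) + log 2 := by
  rw [cosh_add_cosh, log_mul (by positivity) (cosh_pos _).ne', log_mul two_ne_zero
    (cosh_pos _).ne']
  simp only [halfSumDiff, LinearMap.coe_mk, AddHom.coe_mk]
  ring

theorem stmt_9 :
    StrictConvexOn ℝ (Set.univ : Set (ℝ × ℝ))
      (fun p : ℝ × ℝ => Real.log (Real.cosh p.1 + Real.cosh p.2)) := by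
  have hsep := strictConvexOn_log_cosh.comp_fst_add_comp_snd strictConvexOn_log_cosh
  have hg := (hsep.comp_linearMap halfSumDiff halfSumDiff_injective).add_const (log 2)
  rw [univ_prod_univ, preimage_univ] at hg
  rwa [funext log_cosh_add_cosh]
end

section
/- Let f₁, f₂ : ℝ → ℝ be continuous, a₁↑, a₁↓, a₂↑, a₂↓ ∈ ℝ, and t ∈ (0,1). Define H(f, a↑, a↓) = ∫_{−1/4}^{1/4} [ log(cosh(a↑) + cosh(f(k))) + log(cosh(a↓) + cosh(f(k))) ] dk. Then H(t·f₁ + (1−t)·f₂, t·a₁↑ + (1−t)·a₂↑, t·a₁↓ + (1−t)·a₂↓) ≤ t·H(f₁, a₁↑, a₁↓) + (1−t)·H(f₂, a₂↑, a₂↓), with strict inequality unless f₁ = f₂ on [−1/4, 1/4], a₁↑ = a₂↑, and a₁↓ = a₂↓. (The generalized free energy H is strictly convex.) -/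
/-- The generalized free energy of the nearest-neighbor Hubbard Boltzmann equation. -/
noncomputable def H (f : ℝ → ℝ) (aup adown : ℝ) : ℝ :=
  ∫ k in (-(1/4 : ℝ))..(1/4 : ℝ),
    (Real.log (Real.cosh aup + Real.cosh (f k)) + Real.log (Real.cosh adown + Real.cosh (f k)))

/-!
Sum-to-product gives `cosh a + cosh x = 2 cosh ((a + x) / 2) cosh ((a - x) / 2)`, so
`log (cosh a + cosh x)` is `log 2` plus the strictly convex function `log ∘ cosh` (its derivative
is `tanh`) evaluated at two linear forms that together determine `(a, x)`. Hence the integrand of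
`H` is strictly convex in `(a↑, a↓, f k)`. Integrating the pointwise inequality gives convexity of
`H`; if the data differ at some point of the interval, continuity makes the pointwise inequality
strict on a neighbourhood of it, and the integrated one is strict.
-/

open Real Set MeasureTheory

theorem Real.strictMono_tanh_s10 : StrictMono tanh := fun x y hxy =>
  lt_of_not_ge fun h => hxy.not_ge <| by
    simpa only [artanh_tanh] using
      strictMonoOn_artanh.monotoneOn (tanh_bijOn.mapsTo trivial) (tanh_bijOn.mapsTo trivial) h

theorem Real.hasDerivAt_log_cosh (x : ℝ) : HasDerivAt (fun y => log (cosh y)) (tanh x) x := by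
  simpa only [tanh_eq_sinh_div_cosh] using (hasDerivAt_cosh x).log (cosh_pos x).ne'

theorem Real.strictConvexOn_log_cosh_s10 : StrictConvexOn ℝ univ fun x => log (cosh x) :=
  StrictMono.strictConvexOn_univ_of_deriv (by fun_prop (disch := exact fun x => (cosh_pos x).ne'))
    (by simpa only [funext fun x => (hasDerivAt_log_cosh x).deriv] using strictMono_tanh_s10)

theorem Real.cosh_add_cosh_s10 (x y : ℝ) :
    cosh x + cosh y = 2 * cosh ((x + y) / 2) * cosh ((x - y) / 2) := by
  have h := congrArg₂ (· + ·) (cosh_add ((x + y) / 2) ((x - y) / 2))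
    (cosh_sub ((x + y) / 2) ((x - y) / 2))
  rw [show (x + y) / 2 + (x - y) / 2 = x by ring, show (x + y) / 2 - (x - y) / 2 = y by ring] at h
  rw [h]
  ring

section
variable {𝕜 E F G β : Type*} [Semiring 𝕜] [PartialOrder 𝕜] [AddCommMonoid E] [AddCommMonoid F]
  [AddCommMonoid G] [Module 𝕜 E] [Module 𝕜 F] [Module 𝕜 G] [AddCommMonoid β] [PartialOrder β]
  [IsOrderedCancelAddMonoid β] [Module 𝕜 β]

theorem StrictConvexOn.add_comp_linearMap {s : Set F} {t : Set G} {f : F → β} {g : G → β}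
    (hf : StrictConvexOn 𝕜 s f) (hg : StrictConvexOn 𝕜 t g) (φ : E →ₗ[𝕜] F) (ψ : E →ₗ[𝕜] G)
    (hφψ : Function.Injective (φ.prod ψ)) :
    StrictConvexOn 𝕜 (φ ⁻¹' s ∩ ψ ⁻¹' t) fun p => f (φ p) + g (ψ p) := by
  refine ⟨(hf.1.linear_preimage φ).inter (hg.1.linear_preimage ψ), ?_⟩
  rintro p ⟨hps, hpt⟩ q ⟨hqs, hqt⟩ hpq a b ha hb hab
  simp only [map_add, map_smul, smul_add]
  rw [add_add_add_comm]
  by_cases hφ : φ p = φ q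
  · have hψ : ψ p ≠ ψ q := fun hψ => hpq (hφψ (Prod.ext hφ hψ))
    exact add_lt_add_of_le_of_lt (hf.convexOn.2 hps hqs ha.le hb.le hab) (hg.2 hpt hqt hψ ha hb hab)
  · exact add_lt_add_of_lt_of_le (hf.2 hps hqs hφ ha hb hab) (hg.convexOn.2 hpt hqt ha.le hb.le hab)
end

section
variable {E : Type*} [NormedAddCommGroup E] [NormedSpace ℝ E] {φ : E → ℝ} {p q : ℝ → E}
  {a b t : ℝ}

theorem ConvexOn.intervalIntegral_comp_le (hφ : ConvexOn ℝ univ φ) (hφc : Continuous φ)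
    (hp : Continuous p) (hq : Continuous q) (hab : a ≤ b) (ht : t ∈ Icc (0 : ℝ) 1) :
    ∫ x in a..b, φ (t • p x + (1 - t) • q x)
      ≤ t * (∫ x in a..b, φ (p x)) + (1 - t) * ∫ x in a..b, φ (q x) := by
  have hint {g : ℝ → ℝ} (hg : Continuous g) : IntervalIntegrable g volume a b :=
    hg.intervalIntegrable a b
  rw [← intervalIntegral.integral_const_mul, ← intervalIntegral.integral_const_mul,
    ← intervalIntegral.integral_add (hint (by fun_prop)) (hint (by fun_prop))]
  exact intervalIntegral.integral_mono_on hab (hint (by fun_prop)) (hint (by fun_prop)) fun x _ =>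
    hφ.2 trivial trivial ht.1 (sub_nonneg.2 ht.2) (add_sub_cancel t 1)

theorem StrictConvexOn.intervalIntegral_comp_lt (hφ : StrictConvexOn ℝ univ φ)
    (hφc : Continuous φ) (hp : Continuous p) (hq : Continuous q) (hab : a < b)
    (ht : t ∈ Ioo (0 : ℝ) 1) (hpq : ∃ c ∈ Icc a b, p c ≠ q c) :
    ∫ x in a..b, φ (t • p x + (1 - t) • q x)
      < t * (∫ x in a..b, φ (p x)) + (1 - t) * ∫ x in a..b, φ (q x) := by
  have hint {g : ℝ → ℝ} (hg : Continuous g) : IntervalIntegrable g volume a b :=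
    hg.intervalIntegrable a b
  rw [← intervalIntegral.integral_const_mul, ← intervalIntegral.integral_const_mul,
    ← intervalIntegral.integral_add (hint (by fun_prop)) (hint (by fun_prop))]
  obtain ⟨c, hc, hpqc⟩ := hpq
  exact intervalIntegral.integral_lt_integral_of_continuousOn_of_le_of_exists_lt hab
    (by fun_prop) (by fun_prop)
    (fun x _ => hφ.convexOn.2 trivial trivial ht.1.le (sub_nonneg.2 ht.2.le) (add_sub_cancel t 1))
    ⟨c, hc, hφ.2 trivial trivial hpqc ht.1 (sub_pos.2 ht.2) (add_sub_cancel t 1)⟩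
end

theorem Real.strictConvexOn_log_cosh_add_cosh :
    StrictConvexOn ℝ univ fun p : ℝ × ℝ => log (cosh p.1 + cosh p.2) := by
  let φ : ℝ × ℝ →ₗ[ℝ] ℝ := (1 / 2 : ℝ) • (LinearMap.fst ℝ ℝ ℝ + LinearMap.snd ℝ ℝ ℝ)
  let ψ : ℝ × ℝ →ₗ[ℝ] ℝ := (1 / 2 : ℝ) • (LinearMap.fst ℝ ℝ ℝ - LinearMap.snd ℝ ℝ ℝ)
  have hφψ : Function.Injective (φ.prod ψ) := fun p q h => by
    simp only [LinearMap.prod_apply, Function.prod_apply, LinearMap.smul_apply,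
      LinearMap.add_apply, LinearMap.sub_apply, LinearMap.fst_apply, LinearMap.snd_apply,
      smul_eq_mul, Prod.mk.injEq, φ, ψ] at h
    exact Prod.ext (by linarith) (by linarith)
  refine ((strictConvexOn_log_cosh_s10.add_comp_linearMap strictConvexOn_log_cosh_s10 φ ψ hφψ).add_const
    (log 2)).congr ?_ |>.subset (by simp) convex_univ
  intro p _
  simp only [φ, ψ, Pi.add_apply, LinearMap.smul_apply, LinearMap.add_apply, LinearMap.sub_apply,
    LinearMap.fst_apply, LinearMap.snd_apply, smul_eq_mul, cosh_add_cosh_s10]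
  rw [log_mul (by positivity) (by positivity), log_mul (by positivity) (by positivity)]
  ring_nf

noncomputable def freeEnergyDensity (p : ℝ × ℝ × ℝ) : ℝ :=
  log (cosh p.1 + cosh p.2.2) + log (cosh p.2.1 + cosh p.2.2)

theorem continuous_freeEnergyDensity : Continuous freeEnergyDensity := by
  unfold freeEnergyDensity
  fun_prop (disch := exact fun p => (add_pos (cosh_pos _) (cosh_pos _)).ne')

theorem strictConvexOn_freeEnergyDensity : StrictConvexOn ℝ univ freeEnergyDensity := by
  let φ : ℝ × ℝ × ℝ →ₗ[ℝ] ℝ × ℝ :=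
    (LinearMap.fst ℝ ℝ (ℝ × ℝ)).prod ((LinearMap.snd ℝ ℝ ℝ).comp (LinearMap.snd ℝ ℝ (ℝ × ℝ)))
  let ψ : ℝ × ℝ × ℝ →ₗ[ℝ] ℝ × ℝ :=
    ((LinearMap.fst ℝ ℝ ℝ).comp (LinearMap.snd ℝ ℝ (ℝ × ℝ))).prod
      ((LinearMap.snd ℝ ℝ ℝ).comp (LinearMap.snd ℝ ℝ (ℝ × ℝ)))
  have hφψ : Function.Injective (φ.prod ψ) := fun p q h => by
    simp only [LinearMap.prod_apply, Function.prod_apply, LinearMap.coe_fst, LinearMap.coe_comp,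
      LinearMap.coe_snd, Function.comp_apply, Prod.mk.eta, Prod.mk.injEq, φ, ψ] at h
    exact Prod.ext h.1.1 h.2
  have h := strictConvexOn_log_cosh_add_cosh.add_comp_linearMap
    strictConvexOn_log_cosh_add_cosh φ ψ hφψ
  rw [preimage_univ, preimage_univ, inter_self] at h
  exact h

theorem H_eq_integral_freeEnergyDensity (f : ℝ → ℝ) (aup adown : ℝ) :
    H f aup adown = ∫ k in (-(1/4 : ℝ))..(1/4 : ℝ), freeEnergyDensity (aup, adown, f k) := rfl

theorem stmt_10 (f₁ f₂ : ℝ → ℝ) (hf₁ : Continuous f₁) (hf₂ : Continuous f₂)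
    (a₁up a₁down a₂up a₂down : ℝ) (t : ℝ) (ht : t ∈ Set.Ioo (0:ℝ) 1) :
    H (fun k => t * f₁ k + (1 - t) * f₂ k) (t * a₁up + (1 - t) * a₂up)
        (t * a₁down + (1 - t) * a₂down)
      ≤ t * H f₁ a₁up a₁down + (1 - t) * H f₂ a₂up a₂down ∧
    (¬((∀ k ∈ Set.Icc (-(1/4 : ℝ)) (1/4 : ℝ), f₁ k = f₂ k) ∧ a₁up = a₂up ∧ a₁down = a₂down) →
      H (fun k => t * f₁ k + (1 - t) * f₂ k) (t * a₁up + (1 - t) * a₂up)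
          (t * a₁down + (1 - t) * a₂down)
        < t * H f₁ a₁up a₁down + (1 - t) * H f₂ a₂up a₂down) := by
  have hp₁ : Continuous fun k => (a₁up, a₁down, f₁ k) := by fun_prop
  have hp₂ : Continuous fun k => (a₂up, a₂down, f₂ k) := by fun_prop
  have hmix : H (fun k => t * f₁ k + (1 - t) * f₂ k) (t * a₁up + (1 - t) * a₂up)
      (t * a₁down + (1 - t) * a₂down) = ∫ k in (-(1/4 : ℝ))..(1/4 : ℝ),
        freeEnergyDensity (t • (a₁up, a₁down, f₁ k) + (1 - t) • (a₂up, a₂down, f₂ k)) := by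
    simp [H_eq_integral_freeEnergyDensity]
  rw [hmix, H_eq_integral_freeEnergyDensity, H_eq_integral_freeEnergyDensity]
  refine ⟨strictConvexOn_freeEnergyDensity.convexOn.intervalIntegral_comp_le
    continuous_freeEnergyDensity hp₁ hp₂ (by norm_num) (Ioo_subset_Icc_self ht), fun hne => ?_⟩
  refine strictConvexOn_freeEnergyDensity.intervalIntegral_comp_lt continuous_freeEnergyDensity
    hp₁ hp₂ (by norm_num) ht ?_
  by_contra! h
  simp only [Prod.mk.injEq] at h
  exact hne ⟨fun k hk => (h k hk).2.2, (h 0 (by norm_num)).1, (h 0 (by norm_num)).2.1⟩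
end

section
/- Let K be a nonempty type and u, v : K → ℂ² be such that for every k ∈ K the pair (u(k), v(k)) is an orthonormal basis of ℂ². If ⟨u(k₁), v(k₂)⟩ · ⟨u(k₂), v(k₁)⟩ = 0 for all k₁, k₂ ∈ K, then ⟨u(k₁), v(k₂)⟩ = 0 for all k₁, k₂ ∈ K. -/
/-!
In dimension two, Parseval's identity for `v₂` in the basis `(u₁, v₁)` and for `v₁` in the basis
`(u₂, v₂)` gives `|⟨u₁, v₂⟩|² = 1 - |⟨v₁, v₂⟩|² = |⟨u₂, v₁⟩|²`. So the two factors of each product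
`⟨u₁, v₂⟩ ⟨u₂, v₁⟩` have the same modulus, and one of them vanishes only if both do.
-/

/-- The standard Hermitian inner product on ℂ², conjugate-linear in the first argument. -/
noncomputable def inn (u v : Fin 2 → ℂ) : ℂ := ∑ i, star (u i) * v i

open scoped InnerProductSpace
open Module

section
variable {𝕜 E : Type*} [RCLike 𝕜] [NormedAddCommGroup E] [InnerProductSpace 𝕜 E]

theorem Orthonormal.sum_sq_norm_inner_right_of_card_eq_finrank {ι : Type*} [Fintype ι]
    [Nonempty ι] {b : ι → E} (hb : Orthonormal 𝕜 b) (hcard : Fintype.card ι = finrank 𝕜 E)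
    (x : E) : ∑ i, ‖⟪b i, x⟫_𝕜‖ ^ 2 = ‖x‖ ^ 2 := by
  have hspan := hb.linearIndependent.span_eq_top_of_card_eq_finrank hcard
  have : FiniteDimensional 𝕜 E := .of_finrank_pos (hcard ▸ Fintype.card_pos)
  simpa using (OrthonormalBasis.mk hb hspan.ge).sum_sq_norm_inner_right x

theorem norm_inner_eq_norm_inner_of_orthonormal_of_finrank_eq_two (hE : finrank 𝕜 E = 2)
    {u₁ v₁ u₂ v₂ : E} (h₁ : Orthonormal 𝕜 ![u₁, v₁]) (h₂ : Orthonormal 𝕜 ![u₂, v₂]) :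
    ‖⟪u₁, v₂⟫_𝕜‖ = ‖⟪u₂, v₁⟫_𝕜‖ := by
  have hcard : Fintype.card (Fin 2) = finrank 𝕜 E := by rw [hE, Fintype.card_fin]
  have parseval₁ := h₁.sum_sq_norm_inner_right_of_card_eq_finrank hcard v₂
  have parseval₂ := h₂.sum_sq_norm_inner_right_of_card_eq_finrank hcard v₁
  simp only [Fin.sum_univ_two, Matrix.cons_val_zero, Matrix.cons_val_one] at parseval₁ parseval₂
  have hv₁ : ‖v₁‖ = 1 := h₁.1 1
  have hv₂ : ‖v₂‖ = 1 := h₂.1 1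
  rw [hv₂] at parseval₁
  rw [hv₁, norm_inner_symm v₂ v₁] at parseval₂
  refine (sq_eq_sq₀ (norm_nonneg _) (norm_nonneg _)).mp ?_
  linarith
end

theorem inn_eq_inner (x y : Fin 2 → ℂ) : inn x y = ⟪WithLp.toLp 2 x, WithLp.toLp 2 y⟫_ℂ := by
  simp [inn, PiLp.inner_apply, mul_comm]

theorem orthonormal_toLp_of_inn {x y : Fin 2 → ℂ} (hx : inn x x = 1) (hy : inn y y = 1)
    (hxy : inn x y = 0) : Orthonormal ℂ ![WithLp.toLp 2 x, WithLp.toLp 2 y] := by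
  rw [inn_eq_inner] at hx hy hxy
  rw [orthonormal_iff_ite]
  intro i j
  fin_cases i <;> fin_cases j <;>
    simp [-inner_self_eq_norm_sq_to_K, hx, hy, hxy, inner_eq_zero_symm.mp hxy]

theorem stmt_12_general (K : Type*) (u v : K → Fin 2 → ℂ)
    (hu : ∀ k, inn (u k) (u k) = 1) (hv : ∀ k, inn (v k) (v k) = 1)
    (huv : ∀ k, inn (u k) (v k) = 0)
    (hprod : ∀ k₁ k₂, inn (u k₁) (v k₂) * inn (u k₂) (v k₁) = 0) :
    ∀ k₁ k₂, inn (u k₁) (v k₂) = 0 := by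
  intro k₁ k₂
  have hnorm : ‖inn (u k₁) (v k₂)‖ = ‖inn (u k₂) (v k₁)‖ := by
    simp only [inn_eq_inner]
    exact norm_inner_eq_norm_inner_of_orthonormal_of_finrank_eq_two finrank_euclideanSpace_fin
      (orthonormal_toLp_of_inn (hu k₁) (hv k₁) (huv k₁))
      (orthonormal_toLp_of_inn (hu k₂) (hv k₂) (huv k₂))
  rcases mul_eq_zero.mp (hprod k₁ k₂) with h | h
  · exact h
  · rwa [← norm_eq_zero, hnorm, norm_eq_zero]

theorem stmt_12 (K : Type*) [Nonempty K] (u v : K → Fin 2 → ℂ)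
    (hu : ∀ k, inn (u k) (u k) = 1) (hv : ∀ k, inn (v k) (v k) = 1)
    (huv : ∀ k, inn (u k) (v k) = 0)
    (hprod : ∀ k₁ k₂, inn (u k₁) (v k₂) * inn (u k₂) (v k₁) = 0) :
    ∀ k₁ k₂, inn (u k₁) (v k₂) = 0 :=
  stmt_12_general K u v hu hv huv hprod
end

section
/- Generalized Fermi-Dirac states have vanishing entropy-production integrand: Let ω(k) = 1 − cos(2πk), let (w↑, w↓) be an orthonormal basis of ℂ², a↑, a↓ ∈ ℝ, and f : ℝ → ℝ a 1-periodic function with f(k) = −f(1/2 − k) for all k. Set λ_σ(k) = (e^{f(k) − a_σ} + 1)^{−1} and λ̃_σ(k) = 1 − λ_σ(k). Then for all real k₁, k₂, k₃, k₄ with k₁ + k₂ − k₃ − k₄ ∈ ℤ and ω(k₁) + ω(k₂) = ω(k₃) + ω(k₄), and all σ₁, σ₂, σ₃, σ₄ ∈ {↑,↓}, writing λᵢ = λ_{σᵢ}(kᵢ): (λ̃₁λ̃₂λ₃λ₄ − λ₁λ₂λ̃₃λ̃₄) · |⟨w_{σ₁}, w_{σ₃}⟩⟨w_{σ₂}, w_{σ₄}⟩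 − ⟨w_{σ₁}, w_{σ₄}⟩⟨w_{σ₂}, w_{σ₃}⟩|² = 0. -/
open Real

lemma omega_add_omega (k k' : ℝ) :
    ω k + ω k' = 2 - 2 * cos (π * (k + k')) * cos (π * (k - k')) := by
  rw [ω, ω, show 2 * π * k = π * (k + k') + π * (k - k') by ring,
    show 2 * π * k' = π * (k + k') - π * (k - k') by ring, cos_add, cos_sub]
  ring

lemma collision_cases_s15 {k₁ k₂ k₃ k₄ : ℝ} {m : ℤ} (hm : k₁ + k₂ - k₃ - k₄ = m)
    (hen : ω k₁ + ω k₂ = ω k₃ + ω k₄) :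
    (∃ n₂ n₄ : ℤ, k₂ = 1/2 - k₁ + n₂ ∧ k₄ = 1/2 - k₃ + n₄) ∨
      (∃ n₃ n₄ : ℤ, k₃ = k₁ + n₃ ∧ k₄ = k₂ + n₄) ∨
      (∃ n₃ n₄ : ℤ, k₃ = k₂ + n₃ ∧ k₄ = k₁ + n₄) := by
  have hsum : cos (π * (k₁ + k₂)) = (-1) ^ m * cos (π * (k₃ + k₄)) := by
    rw [← cos_add_int_mul_pi]
    congr 1
    linear_combination π * hm
  have hdiff : cos (π * (k₁ - k₂) + m * π) = (-1) ^ m * cos (π * (k₁ - k₂)) :=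
    cos_add_int_mul_pi _ m
  have key : cos (π * (k₃ + k₄)) *
      (cos (π * (k₁ - k₂) + m * π) - cos (π * (k₃ - k₄))) = 0 := by
    rw [omega_add_omega, omega_add_omega, hsum] at hen
    linear_combination (-1 / 2 : ℝ) * hen + cos (π * (k₃ + k₄)) * hdiff
  rcases mul_eq_zero.mp key with hcos | hcos
  · obtain ⟨n, hn⟩ := cos_eq_zero_iff.mp hcos
    have h34 : k₃ + k₄ = n + 1/2 := mul_left_cancel₀ pi_ne_zero (hn.trans (by ring))
    exact Or.inl ⟨n + m, n, by push_cast; linarith, by linarith⟩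
  · obtain ⟨n, hn | hn⟩ := cos_eq_cos_iff.mp (sub_eq_zero.mp hcos)
    · have h34 : k₃ - k₄ = 2 * n + (k₁ - k₂ + m) :=
        mul_left_cancel₀ pi_ne_zero (hn.trans (by ring))
      exact Or.inr (Or.inl ⟨n, -m - n, by linarith, by push_cast; linarith⟩)
    · have h34 : k₃ - k₄ = 2 * n - (k₁ - k₂ + m) :=
        mul_left_cancel₀ pi_ne_zero (hn.trans (by ring))
      exact Or.inr (Or.inr ⟨n - m, -n, by push_cast; linarith, by push_cast; linarith⟩)

lemma collision_invariant {f : ℝ → ℝ} (hper : Function.Periodic f 1)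
    (hsym : ∀ k : ℝ, f k = -f (1/2 - k)) {k₁ k₂ k₃ k₄ : ℝ} {m : ℤ}
    (hm : k₁ + k₂ - k₃ - k₄ = m) (hen : ω k₁ + ω k₂ = ω k₃ + ω k₄) :
    f k₁ + f k₂ = f k₃ + f k₄ := by
  have hint (x : ℝ) (n : ℤ) : f (x + n) = f x := by simpa using hper.int_mul n x
  have hrefl (x : ℝ) (n : ℤ) : f (1/2 - x + n) = -f x := by
    rw [hint, hsym, sub_sub_cancel]
  rcases collision_cases_s15 hm hen with ⟨n₂, n₄, rfl, rfl⟩ | ⟨n₃, n₄, rfl, rfl⟩ | ⟨n₃, n₄, rfl, rfl⟩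
  · rw [hrefl, hrefl]; ring
  · rw [hint, hint]
  · rw [hint, hint]; ring

lemma inn_swap (u v : Fin 2 → ℂ) : inn v u = star (inn u v) := by
  simp [inn, mul_comm]

lemma inn_eq_ite_of_orthonormal {w : Bool → Fin 2 → ℂ} (hnorm : ∀ σ, inn (w σ) (w σ) = 1)
    (horth : inn (w true) (w false) = 0) (σ τ : Bool) :
    inn (w σ) (w τ) = if σ = τ then 1 else 0 := by
  cases σ <;> cases τ <;> simp [hnorm, horth, inn_swap (w true)]

lemma eq_and_eq_or_of_exchange_ne_zero {α R : Type*} [DecidableEq α] [Ring R]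
    {σ₁ σ₂ σ₃ σ₄ : α}
    (h : ((if σ₁ = σ₃ then 1 else 0) * (if σ₂ = σ₄ then 1 else 0)
      - (if σ₁ = σ₄ then 1 else 0) * (if σ₂ = σ₃ then 1 else 0) : R) ≠ 0) :
    (σ₁ = σ₃ ∧ σ₂ = σ₄) ∨ (σ₁ = σ₄ ∧ σ₂ = σ₃) := by
  by_contra! hne
  split_ifs at h <;> simp_all

lemma fermiDirac_detailed_balance {x₁ x₂ x₃ x₄ : ℝ} (h : x₁ + x₂ = x₃ + x₄) :
    (1 - (exp x₁ + 1)⁻¹) * (1 - (exp x₂ + 1)⁻¹) * (exp x₃ + 1)⁻¹ * (exp x₄ + 1)⁻¹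
      - (exp x₁ + 1)⁻¹ * (exp x₂ + 1)⁻¹ * (1 - (exp x₃ + 1)⁻¹) * (1 - (exp x₄ + 1)⁻¹)
      = 0 := by
  have hsub (x : ℝ) : 1 - (exp x + 1)⁻¹ = exp x * (exp x + 1)⁻¹ := by
    field_simp
    ring
  have hexp : exp x₁ * exp x₂ = exp x₃ * exp x₄ := by rw [← exp_add, ← exp_add, h]
  rw [hsub, hsub, hsub, hsub]
  linear_combination
    (exp x₁ + 1)⁻¹ * (exp x₂ + 1)⁻¹ * (exp x₃ + 1)⁻¹ * (exp x₄ + 1)⁻¹ * hexp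

/-- Generalized Fermi-Dirac states have vanishing entropy-production integrand.
The spin index `σ : Bool` encodes `↑ = true`, `↓ = false`. -/
theorem stmt_15 (w : Bool → Fin 2 → ℂ)
    (hnorm : ∀ σ, inn (w σ) (w σ) = 1) (horth : inn (w true) (w false) = 0)
    (a : Bool → ℝ) (f : ℝ → ℝ)
    (hper : Function.Periodic f 1) (hsym : ∀ k : ℝ, f k = -f (1/2 - k))
    (lam : Bool → ℝ → ℝ) (hlam : ∀ σ k, lam σ k = (Real.exp (f k - a σ) + 1)⁻¹)
    (k₁ k₂ k₃ k₄ : ℝ) (hmom : ∃ m : ℤ, k₁ + k₂ - k₃ - k₄ = m)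
    (hen : ω k₁ + ω k₂ = ω k₃ + ω k₄) (σ₁ σ₂ σ₃ σ₄ : Bool) :
    ((1 - lam σ₁ k₁) * (1 - lam σ₂ k₂) * lam σ₃ k₃ * lam σ₄ k₄
        - lam σ₁ k₁ * lam σ₂ k₂ * (1 - lam σ₃ k₃) * (1 - lam σ₄ k₄)) *
      (‖inn (w σ₁) (w σ₃) * inn (w σ₂) (w σ₄)
        - inn (w σ₁) (w σ₄) * inn (w σ₂) (w σ₃)‖) ^ 2 = 0 := by
  obtain ⟨m, hm⟩ := hmom
  have hf := collision_invariant hper hsym hm hen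
  simp only [hlam, inn_eq_ite_of_orthonormal hnorm horth]
  rcases eq_or_ne (((if σ₁ = σ₃ then 1 else 0) * (if σ₂ = σ₄ then 1 else 0)
      - (if σ₁ = σ₄ then 1 else 0) * (if σ₂ = σ₃ then 1 else 0)) : ℂ) 0 with hex | hex
  · rw [hex, norm_zero]
    ring
  · have ha : a σ₁ + a σ₂ = a σ₃ + a σ₄ := by
      rcases eq_and_eq_or_of_exchange_ne_zero hex with ⟨rfl, rfl⟩ | ⟨rfl, rfl⟩ <;> ring
    rw [fermiDirac_detailed_balance (by linarith), zero_mul]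
end

section
/- Generalized Fermi-Dirac states annihilate the dissipative collision integrand pointwise: Let ω(k) = 1 − cos(2πk), let (w↑, w↓) be an orthonormal basis of ℂ², a↑, a↓ ∈ ℝ, and f : ℝ → ℝ a 1-periodic function with f(k) = −f(1/2 − k) for all k. Define the 2×2 matrix W_st(k) = Σ_{σ∈{↑,↓}} (e^{f(k) − a_σ} + 1)^{−1} · w_σ w_σ*, and for 2×2 matrices set W̃ = 1 − W, A_quad(W₁,W₂,W₃,W₄) = −W̃₁W₃W̃₂W₄ − W₄W̃₂W₃W̃₁ + W₁W̃₃W₂W̃₄ + W̃₄W₂W̃₃W₁, A_tr(W₁,W₂,W₃,W₄) = (W̃₁W₃ + W₃W̃₁)·tr(W̃₂W₄) − (W₁W̃₃ + W̃₃W₁)·tr(W₂W̃₄). Then for all real k₁, k₂, k₃, k₄ with k₁ + k₂ − k₃ − k₄ ∈ ℤ and ω(k₁) + ω(k₂) = ω(k₃) + ω(k₄), with Wᵢ = W_st(kᵢ): A_quad(W₁,W₂,W₃,W₄) = 0 and A_tr(W₁,W₂,W₃,W₄) = 0. -/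
/-- The outer product w w* of a vector w ∈ ℂ² as a 2×2 matrix. -/
noncomputable def outer (u : Fin 2 → ℂ) : Matrix (Fin 2) (Fin 2) ℂ :=
  Matrix.of fun i j => u i * star (u j)

/-- The quadratic part of the symmetrized dissipative collision integrand. -/
noncomputable def Aquad (W₁ W₂ W₃ W₄ : Matrix (Fin 2) (Fin 2) ℂ) : Matrix (Fin 2) (Fin 2) ℂ :=
  -((1 - W₁) * W₃ * (1 - W₂) * W₄) - W₄ * (1 - W₂) * W₃ * (1 - W₁)
    + W₁ * (1 - W₃) * W₂ * (1 - W₄) + (1 - W₄) * W₂ * (1 - W₃) * W₁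

/-- The trace part of the symmetrized dissipative collision integrand. -/
noncomputable def Atr (W₁ W₂ W₃ W₄ : Matrix (Fin 2) (Fin 2) ℂ) : Matrix (Fin 2) (Fin 2) ℂ :=
  ((1 - W₂) * W₄).trace • ((1 - W₁) * W₃ + W₃ * (1 - W₁))
    - (W₂ * (1 - W₄)).trace • (W₁ * (1 - W₃) + (1 - W₃) * W₁)

section Collisions

open Real

noncomputable def fermiDirac (ε : ℝ) : ℝ := (exp ε + 1)⁻¹

theorem one_sub_fermiDirac (ε : ℝ) : 1 - fermiDirac ε = exp ε * fermiDirac ε := by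
  rw [fermiDirac]
  field_simp
  ring

theorem fermiDirac_detailedBalance {ε₁ ε₂ ε₃ ε₄ : ℝ} (h : ε₁ + ε₂ = ε₃ + ε₄) :
    (1 - fermiDirac ε₁) * fermiDirac ε₃ * ((1 - fermiDirac ε₂) * fermiDirac ε₄)
      = fermiDirac ε₁ * (1 - fermiDirac ε₃) * (fermiDirac ε₂ * (1 - fermiDirac ε₄)) := by
  simp only [one_sub_fermiDirac]
  calc _ = exp (ε₁ + ε₂) * (fermiDirac ε₁ * fermiDirac ε₂ * fermiDirac ε₃ * fermiDirac ε₄) := by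
          rw [exp_add]; ring
    _ = exp (ε₃ + ε₄) * (fermiDirac ε₁ * fermiDirac ε₂ * fermiDirac ε₃ * fermiDirac ε₄) := by
          rw [h]
    _ = _ := by rw [exp_add]; ring

def IsCollision (k₁ k₂ k₃ k₄ : ℝ) : Prop :=
  (∃ m : ℤ, k₁ + k₂ - k₃ - k₄ = m) ∧ ω k₁ + ω k₂ = ω k₃ + ω k₄

theorem cos_two_pi_mul_add_cos_two_pi_mul (p q : ℝ) :
    cos (2 * π * p) + cos (2 * π * q) = 2 * cos (π * (p + q)) * cos (π * (p - q)) := by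
  rw [cos_add_cos]
  ring_nf

theorem IsCollision.cases {k₁ k₂ k₃ k₄ : ℝ} (h : IsCollision k₁ k₂ k₃ k₄) :
    (∃ n n' : ℤ, k₁ + k₂ = n + 1 / 2 ∧ k₃ + k₄ = n' + 1 / 2) ∨
      (∃ j j' : ℤ, k₃ = k₁ + j ∧ k₄ = k₂ + j') ∨ (∃ j j' : ℤ, k₃ = k₂ + j ∧ k₄ = k₁ + j') := by
  obtain ⟨⟨m, hm⟩, hen⟩ := h
  have hsum : cos (π * (k₃ + k₄)) = (-1) ^ m * cos (π * (k₁ + k₂)) := by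
    rw [← cos_sub_int_mul_pi]
    congr 1
    linear_combination (-π) * hm
  have hcos : cos (π * (k₁ + k₂)) * (cos (π * (k₁ - k₂)) - cos (π * (k₃ - k₄) + m * π)) = 0 := by
    rw [cos_add_int_mul_pi]
    unfold ω at hen
    linear_combination (-1 / 2 : ℝ) * hen - (1 / 2 : ℝ) * cos_two_pi_mul_add_cos_two_pi_mul k₁ k₂
      + (1 / 2 : ℝ) * cos_two_pi_mul_add_cos_two_pi_mul k₃ k₄ + cos (π * (k₃ - k₄)) * hsum
  rcases mul_eq_zero.mp hcos with hc | hc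
  · obtain ⟨n, hn⟩ := cos_eq_zero_iff.mp hc
    have h12 : k₁ + k₂ = n + 1 / 2 := by
      apply mul_left_cancel₀ pi_ne_zero
      linear_combination hn
    exact Or.inl ⟨n, n - m, h12, by push_cast; linarith⟩
  · obtain ⟨j, hj | hj⟩ := cos_eq_cos_iff.mp (sub_eq_zero.mp hc)
    · have hd : k₃ - k₄ + m = 2 * j + (k₁ - k₂) := by
        apply mul_left_cancel₀ pi_ne_zero
        linear_combination hj
      exact Or.inr (Or.inl ⟨j - m, -j, by push_cast; linarith, by push_cast; linarith⟩)
    · have hd : k₃ - k₄ + m = 2 * j - (k₁ - k₂) := by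
        apply mul_left_cancel₀ pi_ne_zero
        linear_combination hj
      exact Or.inr (Or.inr ⟨j - m, -j, by push_cast; linarith, by push_cast; linarith⟩)

theorem IsCollision.map_add_eq_add {k₁ k₂ k₃ k₄ : ℝ} (h : IsCollision k₁ k₂ k₃ k₄) {f : ℝ → ℝ}
    (hper : Function.Periodic f 1) (hsym : ∀ k, f k = -f (1 / 2 - k)) :
    f k₁ + f k₂ = f k₃ + f k₄ := by
  have hint (x : ℝ) (n : ℤ) : f (x + n) = f x := by simpa using hper.int_mul n x
  have hhalf {x y : ℝ} {n : ℤ} (hxy : x + y = n + 1 / 2) : f x = -f y := by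
    rw [show x = 1 / 2 - y + n by linarith, hint, hsym y, neg_neg]
  rcases h.cases with ⟨n, n', h12, h34⟩ | ⟨j, j', rfl, rfl⟩ | ⟨j, j', rfl, rfl⟩
  · rw [hhalf h12, hhalf h34]
    ring
  · rw [hint, hint]
  · rw [hint, hint, add_comm]

end Collisions

namespace CompleteOrthogonalIdempotents

variable (R : Type*) {A I : Type*} [CommSemiring R] [Semiring A] [Algebra R A] [Fintype I]
  {e : I → A}

noncomputable def piAlgHom (he : CompleteOrthogonalIdempotents e) : (I → R) →ₐ[R] A where
  toFun x := ∑ i, x i • e i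
  map_one' := by simpa using he.complete
  map_mul' x y := by
    classical
    simp only [Pi.mul_apply, Finset.sum_mul, Finset.mul_sum, smul_mul_smul_comm, he.mul_eq,
      smul_ite, smul_zero, Finset.sum_ite_eq', Finset.mem_univ, if_true, mul_smul]
  map_zero' := by simp
  map_add' x y := by simp [add_smul, Finset.sum_add_distrib]
  commutes' r := by
    simp [← Finset.smul_sum, he.complete, Algebra.algebraMap_eq_smul_one]

variable {R}

theorem piAlgHom_apply (he : CompleteOrthogonalIdempotents e) (x : I → R) :
    he.piAlgHom R x = ∑ i, x i • e i := rfl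

end CompleteOrthogonalIdempotents

theorem star_inn (u v : Fin 2 → ℂ) : star (inn u v) = inn v u := by
  simp [inn, mul_comm]

theorem outer_mul_outer (u v : Fin 2 → ℂ) :
    outer u * outer v = inn u v • Matrix.of fun i j => u i * star (v j) := by
  ext i j
  simp only [outer, inn, Matrix.mul_apply, Matrix.of_apply, Matrix.smul_apply, smul_eq_mul,
    Finset.sum_mul]
  exact Finset.sum_congr rfl fun _ _ => by ring

theorem trace_outer (u : Fin 2 → ℂ) : (outer u).trace = inn u u := by
  simp [Matrix.trace, outer, inn, mul_comm]

section Orthonormal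

variable {w : Bool → Fin 2 → ℂ} (hnorm : ∀ σ, inn (w σ) (w σ) = 1)
  (horth : inn (w true) (w false) = 0)
include hnorm horth

theorem inn_eq_ite (σ τ : Bool) : inn (w σ) (w τ) = if σ = τ then 1 else 0 := by
  rcases σ <;> rcases τ <;> simp [hnorm, horth, ← star_inn (w true) (w false)]

theorem sum_outer_eq_one : ∑ σ, outer (w σ) = 1 := by
  let U : Matrix (Fin 2) Bool ℂ := Matrix.of fun i σ => w σ i
  have hUU : U.conjTranspose * U = 1 := by
    ext σ τ
    simpa only [inn, U, Matrix.mul_apply, Matrix.one_apply, Matrix.conjTranspose_apply,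
      Matrix.of_apply] using inn_eq_ite hnorm horth σ τ
  ext i j
  simpa [U, outer, Matrix.mul_apply, Matrix.sum_apply] using
    congr_fun₂ ((Matrix.mul_eq_one_comm_of_equiv finTwoEquiv.symm).mp hUU) i j

theorem completeOrthogonalIdempotents_outer :
    CompleteOrthogonalIdempotents fun σ => outer (w σ) := by
  refine ⟨⟨fun σ => ?_, fun σ τ hστ => ?_⟩, sum_outer_eq_one hnorm horth⟩
  · rw [IsIdempotentElem, outer_mul_outer, hnorm, one_smul]
    rfl
  · simp [outer_mul_outer, inn_eq_ite hnorm horth, hστ]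

end Orthonormal

section CollisionIntegrand

variable {B : Type*} [CommRing B]

theorem Aquad_map {F : Type*} [FunLike F B (Matrix (Fin 2) (Fin 2) ℂ)]
    [RingHomClass F B (Matrix (Fin 2) (Fin 2) ℂ)] (φ : F) (x₁ x₂ x₃ x₄ : B) :
    Aquad (φ x₁) (φ x₂) (φ x₃) (φ x₄)
      = φ (2 * (x₁ * (1 - x₃) * x₂ * (1 - x₄) - (1 - x₁) * x₃ * (1 - x₂) * x₄)) := by
  rw [Aquad, ← map_one φ]
  simp only [← map_sub, ← map_mul, ← map_neg, ← map_add]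
  congr 1
  ring

theorem Atr_map [Algebra ℂ B] (φ : B →ₐ[ℂ] Matrix (Fin 2) (Fin 2) ℂ) (x₁ x₂ x₃ x₄ : B) :
    Atr (φ x₁) (φ x₂) (φ x₃) (φ x₄)
      = φ (2 * ((φ ((1 - x₂) * x₄)).trace • ((1 - x₁) * x₃)
          - (φ (x₂ * (1 - x₄))).trace • (x₁ * (1 - x₃)))) := by
  rw [Atr, ← map_one φ]
  simp only [← map_sub, ← map_mul, ← map_add, ← map_smul]
  congr 1
  rw [mul_comm x₃, mul_comm (1 - x₃)]
  simp only [← two_mul, mul_sub, mul_smul_comm]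

end CollisionIntegrand

section Spectral

variable {I : Type*} [Fintype I] {e : I → Matrix (Fin 2) (Fin 2) ℂ}
  (he : CompleteOrthogonalIdempotents e) {x₁ x₂ x₃ x₄ : I → ℂ}
include he

theorem trace_piAlgHom (htr : ∀ i, (e i).trace = 1) (x : I → ℂ) :
    (he.piAlgHom ℂ x).trace = ∑ i, x i := by
  simp [CompleteOrthogonalIdempotents.piAlgHom_apply, Matrix.trace_sum, htr]

theorem Aquad_piAlgHom_eq_zero
    (hbal : ∀ i,
      (1 - x₁ i) * x₃ i * ((1 - x₂ i) * x₄ i) = x₁ i * (1 - x₃ i) * (x₂ i * (1 - x₄ i))) :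
    Aquad (he.piAlgHom ℂ x₁) (he.piAlgHom ℂ x₂) (he.piAlgHom ℂ x₃) (he.piAlgHom ℂ x₄) = 0 := by
  rw [Aquad_map, ← map_zero (he.piAlgHom ℂ)]
  congr 1
  funext i
  simp only [Pi.mul_apply, Pi.sub_apply, Pi.ofNat_apply]
  linear_combination (-2 : ℂ) * hbal i

theorem Atr_piAlgHom_eq_zero (htr : ∀ i, (e i).trace = 1)
    (hbal : ∀ i j,
      (1 - x₁ i) * x₃ i * ((1 - x₂ j) * x₄ j) = x₁ i * (1 - x₃ i) * (x₂ j * (1 - x₄ j))) :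
    Atr (he.piAlgHom ℂ x₁) (he.piAlgHom ℂ x₂) (he.piAlgHom ℂ x₃) (he.piAlgHom ℂ x₄) = 0 := by
  rw [Atr_map, trace_piAlgHom he htr, trace_piAlgHom he htr, ← map_zero (he.piAlgHom ℂ)]
  congr 1
  funext i
  have hsum : ∑ j, ((1 - x₁ i) * x₃ i * ((1 - x₂ j) * x₄ j)
      - x₁ i * (1 - x₃ i) * (x₂ j * (1 - x₄ j))) = 0 :=
    Finset.sum_eq_zero fun j _ => sub_eq_zero.mpr (hbal i j)
  simp only [Finset.sum_sub_distrib, ← Finset.mul_sum] at hsum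
  simp only [Pi.mul_apply, Pi.sub_apply, Pi.ofNat_apply, Pi.smul_apply, smul_eq_mul]
  linear_combination 2 * hsum

end Spectral

/-- The spin index `σ : Bool` encodes `↑ = true`, `↓ = false`. -/
theorem stmt_16 (w : Bool → Fin 2 → ℂ)
    (hnorm : ∀ σ, inn (w σ) (w σ) = 1) (horth : inn (w true) (w false) = 0)
    (a : Bool → ℝ) (f : ℝ → ℝ)
    (hper : Function.Periodic f 1) (hsym : ∀ k : ℝ, f k = -f (1/2 - k))
    (Wst : ℝ → Matrix (Fin 2) (Fin 2) ℂ)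
    (hWst : ∀ k, Wst k = ((Real.exp (f k - a true) + 1)⁻¹ : ℂ) • outer (w true)
      + ((Real.exp (f k - a false) + 1)⁻¹ : ℂ) • outer (w false))
    (k₁ k₂ k₃ k₄ : ℝ) (hmom : ∃ m : ℤ, k₁ + k₂ - k₃ - k₄ = m)
    (hen : ω k₁ + ω k₂ = ω k₃ + ω k₄) :
    Aquad (Wst k₁) (Wst k₂) (Wst k₃) (Wst k₄) = 0 ∧
    Atr (Wst k₁) (Wst k₂) (Wst k₃) (Wst k₄) = 0 := by
  have he := completeOrthogonalIdempotents_outer hnorm horth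
  have htr (σ : Bool) : (outer (w σ)).trace = 1 := (trace_outer _).trans (hnorm σ)
  let n (k : ℝ) (σ : Bool) : ℂ := fermiDirac (f k - a σ)
  have hW (k : ℝ) : Wst k = he.piAlgHom ℂ (n k) := by
    simp [hWst, CompleteOrthogonalIdempotents.piAlgHom_apply, n, fermiDirac]
  have hf : f k₁ + f k₂ = f k₃ + f k₄ := IsCollision.map_add_eq_add ⟨hmom, hen⟩ hper hsym
  have hbal (σ τ : Bool) :
      (1 - n k₁ σ) * n k₃ σ * ((1 - n k₂ τ) * n k₄ τ)
        = n k₁ σ * (1 - n k₃ σ) * (n k₂ τ * (1 - n k₄ τ)) := by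
    simp only [n]
    exact_mod_cast fermiDirac_detailedBalance
      (show f k₁ - a σ + (f k₂ - a τ) = f k₃ - a σ + (f k₄ - a τ) by linarith)
  simp only [hW]
  exact ⟨Aquad_piAlgHom_eq_zero he fun σ => hbal σ σ, Atr_piAlgHom_eq_zero he htr hbal⟩
end
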